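/- A 2-dimensional subspace W ⊆ 𝔭 belongs to 𝒳 = {W : SO(3)·W = 𝔭} if and only if W contains an element of the SO(3)-orbit of X₀ = diag(1,1,−2). -/

import Mathlib

/-
A trace-free symmetric 3×3 matrix is determined up to SO(3)-conjugacy by τ = tr(A²) and
δ = det A (they fix its characteristic polynomial), and these satisfy the discriminant bound
54 δ² ≤ τ³, with equality exactly on the multiples of the orbit of X₀ = diag(1, 1, -2).
If W contains a conjugate w of X₀, pick v ∈ W orthogonal to w for the trace form; on the half
circle θ ↦ s cos θ • w + r sin θ • v of the sphere tr(B²) = τ in W the determinant runs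
from -2s³ to 2s³, the two extreme values, so by the intermediate value theorem it takes every
admissible value δ. Conversely, if every element of 𝔭 is conjugate into W, so is X₀ itself.
-/

theorem mul_sq_le_sum_sq_pow_of_add_add_eq_zero {a b c : ℝ} (h : a + b + c = 0) :
    54 * (a * b * c) ^ 2 ≤ (a ^ 2 + b ^ 2 + c ^ 2) ^ 3 := by
  obtain rfl : c = -a - b := by linarith
  nlinarith [sq_nonneg ((a - b) * (2 * a + b) * (a + 2 * b))]

theorem Submodule.exists_ne_zero_trace_mul_eq_zero {n K : Type*} [Fintype n] [Field K]
    {W : Submodule K (Matrix n n K)} (hW : 1 < Module.finrank K W) (M : Matrix n n K) :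
    ∃ N ∈ W, N ≠ 0 ∧ (M * N).trace = 0 := by
  let f : W →ₗ[K] K := Matrix.traceLinearMap n K K ∘ₗ LinearMap.mulLeft K M ∘ₗ W.subtype
  have hf : LinearMap.ker f ≠ ⊥ :=
    LinearMap.ker_ne_bot_of_finrank_lt (by rwa [Module.finrank_self])
  obtain ⟨N, hN, hN0⟩ := Submodule.exists_mem_ne_zero_of_ne_bot hf
  exact ⟨N, N.2, by simpa using hN0, hN⟩

namespace Matrix

variable {n : Type*} [Fintype n]

theorem trace_mul_self_smul_add_smul {R : Type*} [CommRing R] (M N : Matrix n n R) (a b : R) :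
    ((a • M + b • N) * (a • M + b • N)).trace
      = a ^ 2 * (M * M).trace + 2 * a * b * (M * N).trace + b ^ 2 * (N * N).trace := by
  simp only [Matrix.add_mul, Matrix.mul_add, smul_mul_assoc, mul_smul_comm,
    trace_add, trace_smul, smul_eq_mul, trace_mul_comm N M]
  ring

section OrthogonalConj

variable [DecidableEq n]
variable {R : Type*} [CommRing R] {U : Matrix n n R}

theorem trace_mul_mul_transpose_of_mem_orthogonalGroup (hU : U ∈ orthogonalGroup n R)
    (M : Matrix n n R) : (U * M * Uᵀ).trace = M.trace := by
  rw [trace_mul_cycle, (mem_orthogonalGroup_iff' n R).mp hU, Matrix.one_mul]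

theorem mul_mul_transpose_mul_mul_mul_transpose_of_mem_orthogonalGroup
    (hU : U ∈ orthogonalGroup n R) (M N : Matrix n n R) :
    U * M * Uᵀ * (U * N * Uᵀ) = U * (M * N) * Uᵀ := by
  simp only [Matrix.mul_assoc, ← Matrix.mul_assoc Uᵀ U, (mem_orthogonalGroup_iff' n R).mp hU,
    Matrix.one_mul]

theorem det_mul_mul_transpose_of_mem_specialOrthogonalGroup (hU : U ∈ specialOrthogonalGroup n R)
    (M : Matrix n n R) : (U * M * Uᵀ).det = M.det := by
  simp [det_mul, det_transpose, (mem_specialOrthogonalGroup_iff.mp hU).2]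

theorem transpose_mul_mul_mul_eq_of_mem_orthogonalGroup (hU : U ∈ orthogonalGroup n R)
    (M : Matrix n n R) : Uᵀ * (U * M * Uᵀ) * U = M := by
  simp only [Matrix.mul_assoc, ← Matrix.mul_assoc Uᵀ U, (mem_orthogonalGroup_iff' n R).mp hU,
    Matrix.one_mul, Matrix.mul_one]

theorem transpose_mem_specialOrthogonalGroup (hU : U ∈ specialOrthogonalGroup n R) :
    Uᵀ ∈ specialOrthogonalGroup n R := by
  obtain ⟨hUo, hUdet⟩ := mem_specialOrthogonalGroup_iff.mp hU
  rw [mem_specialOrthogonalGroup_iff, mem_orthogonalGroup_iff, transpose_transpose, det_transpose]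
  exact ⟨(mem_orthogonalGroup_iff' n R).mp hUo, hUdet⟩

end OrthogonalConj

theorem IsHermitian.trace_mul_self_pos {A : Matrix n n ℝ} (hA : A.IsHermitian) (h0 : A ≠ 0) :
    0 < (A * A).trace := by
  conv => enter [2, 1, 1]; rw [← hA.eq]
  exact lt_of_le_of_ne (posSemidef_conjTranspose_mul_self A).trace_nonneg
    (Ne.symm (trace_conjTranspose_mul_self_eq_zero_iff.not.mpr h0))

section Spectral

variable [DecidableEq n]

theorem IsHermitian.exists_mem_orthogonalGroup {A : Matrix n n ℝ} (hA : A.IsHermitian) :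
    ∃ U ∈ orthogonalGroup n ℝ, A = U * diagonal hA.eigenvalues * Uᵀ := by
  have hA' := hA.spectral_theorem
  simp only [Unitary.conjStarAlgAut_apply, RCLike.ofReal_real_eq_id, Function.id_comp] at hA'
  exact ⟨_, hA.eigenvectorUnitary.2, hA'⟩

theorem exists_diagonal_sign_det_eq_neg_one [Nonempty n] :
    ∃ s : n → ℝ, (∀ i, s i * s i = 1) ∧ (diagonal s).det = -1 := by
  obtain ⟨i⟩ := ‹Nonempty n›
  refine ⟨fun j => if j = i then -1 else 1, fun j => ?_, ?_⟩
  · dsimp only; split_ifs <;> norm_num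
  · simp [det_diagonal, Finset.prod_ite_eq']

theorem IsHermitian.exists_mem_specialOrthogonalGroup [Nonempty n] {A : Matrix n n ℝ}
    (hA : A.IsHermitian) :
    ∃ U ∈ specialOrthogonalGroup n ℝ, A = U * diagonal hA.eigenvalues * Uᵀ := by
  obtain ⟨U, hU, hAU⟩ := hA.exists_mem_orthogonalGroup
  have hdet : U.det * U.det = 1 := by
    simpa [det_transpose] using congrArg det ((mem_orthogonalGroup_iff n ℝ).mp hU)
  rcases mul_self_eq_one_iff.mp hdet with h | h
  · exact ⟨U, ⟨hU, h⟩, hAU⟩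
  -- flipping the sign of one eigenvector fixes the determinant
  obtain ⟨s, hs, hsdet⟩ := exists_diagonal_sign_det_eq_neg_one (n := n)
  have hS : diagonal s ∈ orthogonalGroup n ℝ := by
    rw [mem_orthogonalGroup_iff]
    simp [diagonal_transpose, diagonal_mul_diagonal, hs]
  refine ⟨U * diagonal s, ⟨mul_mem hU hS, by simp [h, hsdet]⟩, ?_⟩
  have hsd : diagonal s * diagonal hA.eigenvalues * diagonal s = diagonal hA.eigenvalues := by
    rw [diagonal_mul_diagonal, diagonal_mul_diagonal]
    congr 1
    funext i
    rw [mul_right_comm, hs, one_mul]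
  rw [transpose_mul, diagonal_transpose]
  conv_lhs => rw [hAU, ← hsd]
  simp only [Matrix.mul_assoc]

theorem IsHermitian.exists_mem_specialOrthogonalGroup_conj_eq_of_charpoly_eq [Nonempty n]
    {A B : Matrix n n ℝ} (hA : A.IsHermitian) (hB : B.IsHermitian)
    (h : A.charpoly = B.charpoly) : ∃ k ∈ specialOrthogonalGroup n ℝ, k * B * kᵀ = A := by
  obtain ⟨U, hU, hAU⟩ := hA.exists_mem_specialOrthogonalGroup
  obtain ⟨V, hV, hBV⟩ := hB.exists_mem_specialOrthogonalGroup
  refine ⟨U * Vᵀ, mul_mem hU (transpose_mem_specialOrthogonalGroup hV), ?_⟩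
  rw [hAU, hBV, (eigenvalues_eq_eigenvalues_iff hA hB).mpr h, transpose_mul, transpose_transpose]
  simp only [Matrix.mul_assoc, ← Matrix.mul_assoc Vᵀ V, (mem_orthogonalGroup_iff' n ℝ).mp hV.1,
    Matrix.one_mul]

theorem IsHermitian.trace_mul_self {A : Matrix n n ℝ} (hA : A.IsHermitian) :
    (A * A).trace = ∑ i, hA.eigenvalues i ^ 2 := by
  obtain ⟨U, hU, hAU⟩ := hA.exists_mem_orthogonalGroup
  conv_lhs => rw [hAU]
  rw [mul_mul_transpose_mul_mul_mul_transpose_of_mem_orthogonalGroup hU,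
    trace_mul_mul_transpose_of_mem_orthogonalGroup hU, diagonal_mul_diagonal, trace_diagonal]
  simp only [sq]

end Spectral

open Polynomial in
theorem charpoly_fin_three {K : Type*} [Field K] [NeZero (2 : K)]
    (M : Matrix (Fin 3) (Fin 3) K) :
    M.charpoly = X ^ 3 - C M.trace * X ^ 2 + C ((M.trace ^ 2 - (M * M).trace) / 2) * X
      - C M.det := by
  have h : (M.trace ^ 2 - (M * M).trace) / 2 = M 0 0 * M 1 1 - M 0 1 * M 1 0
      + M 0 0 * M 2 2 - M 0 2 * M 2 0 + M 1 1 * M 2 2 - M 1 2 * M 2 1 := by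
    rw [div_eq_iff two_ne_zero]
    simp only [trace_fin_three, mul_apply, Fin.sum_univ_three]
    ring
  rw [h, charpoly, det_fin_three, det_fin_three, trace_fin_three]
  simp
  ring

theorem IsHermitian.mul_sq_det_le_trace_mul_self_pow {A : Matrix (Fin 3) (Fin 3) ℝ}
    (hA : A.IsHermitian) (h : A.trace = 0) : 54 * A.det ^ 2 ≤ (A * A).trace ^ 3 := by
  rw [hA.trace_eq_sum_eigenvalues, Fin.sum_univ_three] at h
  rw [hA.det_eq_prod_eigenvalues, hA.trace_mul_self, Fin.prod_univ_three, Fin.sum_univ_three]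
  exact mul_sq_le_sum_sq_pow_of_add_add_eq_zero (by simpa using h)

end Matrix

open Matrix

theorem exists_smul_add_smul_trace_mul_self_eq_det_eq {w v : Matrix (Fin 3) (Fin 3) ℝ}
    (hw : (w * w).trace = 6) (hwdet : w.det = -2) (hwv : (w * v).trace = 0)
    (hv : 0 < (v * v).trace) {τ δ : ℝ} (h : 54 * δ ^ 2 ≤ τ ^ 3) :
    ∃ a b : ℝ,
      ((a • w + b • v) * (a • w + b • v)).trace = τ ∧ (a • w + b • v).det = δ := by
  have hτ : 0 ≤ τ := (Odd.pow_nonneg_iff (by decide)).mp (le_trans (by positivity) h)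
  set s := √(τ / 6)
  set r := √(τ / (v * v).trace)
  have hs : s ^ 2 = τ / 6 := Real.sq_sqrt (by positivity)
  have hr : r ^ 2 = τ / (v * v).trace := Real.sq_sqrt (by positivity)
  have hδ : |δ| ≤ 2 * s ^ 3 := by
    refine abs_le_of_sq_le_sq ?_ (by positivity)
    have : (2 * s ^ 3) ^ 2 = τ ^ 3 / 54 := by
      rw [show (2 * s ^ 3) ^ 2 = 4 * (s ^ 2) ^ 3 by ring, hs]; ring
    linarith
  -- along this arc tr(B²) stays equal to τ, while B runs from s • w to -s • w
  let f : ℝ → ℝ := fun θ => ((s * Real.cos θ) • w + (r * Real.sin θ) • v).det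
  have hf : Continuous f := by fun_prop
  have hf0 : f 0 = -(2 * s ^ 3) := by simp [f, hwdet]; ring
  have hfπ : f Real.pi = 2 * s ^ 3 := by simp [f, det_neg, hwdet]; ring
  obtain ⟨θ, -, hθ⟩ := intermediate_value_Icc Real.pi_pos.le hf.continuousOn
    (show δ ∈ Set.Icc (f 0) (f Real.pi) by rw [hf0, hfπ]; exact abs_le.mp hδ)
  refine ⟨s * Real.cos θ, r * Real.sin θ, ?_, hθ⟩
  rw [trace_mul_self_smul_add_smul, hw, hwv, mul_zero, add_zero, mul_pow, mul_pow, hs, hr]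
  field_simp
  linear_combination τ * Real.cos_sq_add_sin_sq θ

theorem exists_mem_specialOrthogonalGroup_conj_mem_eq
    {W : Submodule ℝ (Matrix (Fin 3) (Fin 3) ℝ)} (hW : ∀ X ∈ W, Xᵀ = X ∧ X.trace = 0)
    (hdim : 1 < Module.finrank ℝ W)
    {w : Matrix (Fin 3) (Fin 3) ℝ} (hw : w ∈ W) (hw2 : (w * w).trace = 6) (hwdet : w.det = -2)
    {A : Matrix (Fin 3) (Fin 3) ℝ} (hA : A.IsHermitian) (hAtr : A.trace = 0) :
    ∃ k ∈ specialOrthogonalGroup (Fin 3) ℝ, ∃ B ∈ W, k * B * kᵀ = A := by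
  obtain ⟨v, hv, hv0, hwv⟩ := W.exists_ne_zero_trace_mul_eq_zero hdim w
  have hvpos := (isHermitian_iff_isSymm.mpr (hW v hv).1).trace_mul_self_pos hv0
  obtain ⟨a, b, hB2, hBdet⟩ := exists_smul_add_smul_trace_mul_self_eq_det_eq hw2 hwdet hwv hvpos
    (hA.mul_sq_det_le_trace_mul_self_pow hAtr)
  have hB : a • w + b • v ∈ W := W.add_mem (W.smul_mem a hw) (W.smul_mem b hv)
  obtain ⟨hBsymm, hBtr⟩ := hW _ hB
  obtain ⟨k, hk, hkB⟩ := hA.exists_mem_specialOrthogonalGroup_conj_eq_of_charpoly_eq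
    (isHermitian_iff_isSymm.mpr hBsymm)
    (by rw [charpoly_fin_three, charpoly_fin_three, hAtr, hBtr, hB2, hBdet])
  exact ⟨k, hk, _, hB, hkB⟩

theorem stmt10 (W : Submodule ℝ (Matrix (Fin 3) (Fin 3) ℝ))
    (hW : ∀ X ∈ W, Xᵀ = X ∧ X.trace = 0)
    (hdim : Module.finrank ℝ W = 2) :
    (∀ A : Matrix (Fin 3) (Fin 3) ℝ, Aᵀ = A → A.trace = 0 →
      ∃ (k : Matrix (Fin 3) (Fin 3) ℝ) (w : Matrix (Fin 3) (Fin 3) ℝ),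
        w ∈ W ∧ k * kᵀ = 1 ∧ k.det = 1 ∧ k * w * kᵀ = A) ↔
    (∃ w ∈ W, ∃ k : Matrix (Fin 3) (Fin 3) ℝ, k * kᵀ = 1 ∧ k.det = 1 ∧
      w = k * !![(1 : ℝ), 0, 0; 0, 1, 0; 0, 0, -2] * kᵀ) := by
  set X₀ : Matrix (Fin 3) (Fin 3) ℝ := !![1, 0, 0; 0, 1, 0; 0, 0, -2]
  have hX₀ : X₀ᵀ = X₀ := by ext i j; fin_cases i <;> fin_cases j <;> rfl
  constructor
  · intro h
    obtain ⟨k, w, hw, hk, hkdet, hkw⟩ := h X₀ hX₀ (by simp [X₀, trace_fin_three]; norm_num)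
    have hko : k ∈ orthogonalGroup (Fin 3) ℝ := (mem_orthogonalGroup_iff _ _).mpr hk
    refine ⟨w, hw, kᵀ, ?_, by rwa [det_transpose], ?_⟩
    · rw [transpose_transpose]; exact (mem_orthogonalGroup_iff' _ _).mp hko
    · rw [transpose_transpose, ← hkw, transpose_mul_mul_mul_eq_of_mem_orthogonalGroup hko]
  · rintro ⟨w, hw, k, hk, hkdet, rfl⟩ A hA hAtr
    have hkso : k ∈ specialOrthogonalGroup (Fin 3) ℝ :=
      ⟨(mem_orthogonalGroup_iff _ _).mpr hk, hkdet⟩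
    have hw2 : (k * X₀ * kᵀ * (k * X₀ * kᵀ)).trace = 6 := by
      rw [mul_mul_transpose_mul_mul_mul_transpose_of_mem_orthogonalGroup hkso.1,
        trace_mul_mul_transpose_of_mem_orthogonalGroup hkso.1]
      simp [X₀, trace_fin_three]; norm_num
    have hwdet : (k * X₀ * kᵀ).det = -2 := by
      rw [det_mul_mul_transpose_of_mem_specialOrthogonalGroup hkso]
      simp [X₀, det_fin_three]
    obtain ⟨k', hk', B, hB, rfl⟩ := exists_mem_specialOrthogonalGroup_conj_mem_eq hW
      (by omega) hw hw2 hwdet (isHermitian_iff_isSymm.mpr hA) hAtr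
    exact ⟨k', B, hB, (mem_orthogonalGroup_iff _ _).mp hk'.1, hk'.2, rfl⟩
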